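/- arXiv:2403.02432 — 3 statements merged into one kernel-verified Lean document; each statement's English description precedes it below -/
import Mathlib

section
/- Let (X,d) be a metric space, and let F_j Γ-converge to F. Suppose the sequence {F_j} is equi-mildly coercive, i.e. there exists a nonempty compact set K ⊆ X such that inf_X F_j = inf_K F_j for all j. Then min_X F exists and equals lim_{j→∞} inf_X F_j, and every cluster point of a sequence of minimizers x_j of F_j is a minimizer of F. -/
open Filter Topology

private lemma splice_tendsto {X : Type*} [MetricSpace X] {φ : ℕ → ℕ} (hφ : StrictMono φ)
    (w : ℕ → X) (x : X) (hw : Tendsto w atTop (𝓝 x)) :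
    ∃ v : ℕ → X, Tendsto v atTop (𝓝 x) ∧ ∀ k, v (φ k) = w k := by
  classical
  refine ⟨fun j => if h : ∃ k, φ k = j then w h.choose else x, ?_, ?_⟩
  · rw [Metric.tendsto_atTop]
    intro ε hε
    obtain ⟨N, hN⟩ := Metric.tendsto_atTop.1 hw ε hε
    refine ⟨φ N, fun j hj => ?_⟩
    by_cases h : ∃ k, φ k = j
    · simp only [dif_pos h]
      apply hN
      have h1 : φ h.choose = j := h.choose_spec
      exact hφ.le_iff_le.1 (h1.symm ▸ hj)
    · simpa only [dif_neg h, dist_self] using hε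
  · intro k
    have h : ∃ k', φ k' = φ k := ⟨k, rfl⟩
    simp only [dif_pos h]
    congr 1
    exact hφ.injective h.choose_spec

theorem stmt4 {X : Type*} [MetricSpace X] (F : ℕ → X → EReal) (Flim : X → EReal)
    -- Γ-convergence, liminf inequality
    (hliminf : ∀ (x : X) (u : ℕ → X), Tendsto u atTop (𝓝 x) →
      Flim x ≤ liminf (fun j => F j (u j)) atTop)
    -- Γ-convergence, recovery sequence (limsup) inequality
    (hlimsup : ∀ x : X, ∃ u : ℕ → X, Tendsto u atTop (𝓝 x) ∧
      limsup (fun j => F j (u j)) atTop ≤ Flim x)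
    -- equi-mild coercivity
    (K : Set X) (hKne : K.Nonempty) (hK : IsCompact K)
    (hcoer : ∀ j, (⨅ x : X, F j x) = ⨅ x ∈ K, F j x) :
    ((∃ x : X, (∀ y : X, Flim x ≤ Flim y) ∧
        Tendsto (fun j => ⨅ y : X, F j y) atTop (𝓝 (Flim x))) ∧
      ∀ (u : ℕ → X) (x : X), (∀ j, ∀ y : X, F j (u j) ≤ F j y) →
        MapClusterPt x atTop u → ∀ y : X, Flim x ≤ Flim y) := by
  classical
  obtain ⟨x0, hx0⟩ := hKne
  set m : ℕ → EReal := fun j => ⨅ x : X, F j x with hm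
  -- upper bound: limsup of infima is at most Flim y for all y
  have h1 : ∀ y : X, limsup m atTop ≤ Flim y := by
    intro y
    obtain ⟨u, hu, hus⟩ := hlimsup y
    exact le_trans (limsup_le_limsup (Eventually.of_forall fun j => iInf_le _ _)) hus
  -- key: along any subsequence converging to x, Flim x ≤ liminf of the values
  have hkey : ∀ (φ : ℕ → ℕ), StrictMono φ → ∀ (w : ℕ → X) (x : X),
      Tendsto w atTop (𝓝 x) → Flim x ≤ liminf (fun k => F (φ k) (w k)) atTop := by
    intro φ hφ w x hw
    obtain ⟨v, hv, hvφ⟩ := splice_tendsto hφ w x hw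
    refine (hliminf x v hv).trans ?_
    have h2 : liminf (fun j => F j (v j)) atTop ≤ liminf (fun k => F (φ k) (v (φ k))) atTop := by
      have h3 : liminf (fun k => F (φ k) (v (φ k))) atTop
          = liminf (fun j => F j (v j)) (map φ atTop) :=
        liminf_comp (fun j => F j (v j)) φ atTop
      rw [h3]
      exact liminf_le_liminf_of_le hφ.tendsto_atTop
    simpa only [hvφ] using h2
  -- cluster points of minimizers are minimizers
  have hmin : ∀ (u : ℕ → X) (x : X), (∀ j, ∀ y : X, F j (u j) ≤ F j y) →
      MapClusterPt x atTop u → ∀ y : X, Flim x ≤ Flim y := by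
    intro u x hu hx y
    obtain ⟨ψ, hψ, hψt⟩ := TopologicalSpace.FirstCountableTopology.tendsto_subseq hx
    have h3 : Flim x ≤ liminf (fun k => F (ψ k) ((u ∘ ψ) k)) atTop := hkey ψ hψ (u ∘ ψ) x hψt
    have h4 : ∀ k, F (ψ k) ((u ∘ ψ) k) = m (ψ k) := fun k =>
      le_antisymm (le_iInf (hu (ψ k))) (iInf_le _ _)
    simp only [h4] at h3
    refine h3.trans (le_trans liminf_le_limsup (le_trans ?_ (h1 y)))
    have h5 : limsup (fun k => m (ψ k)) atTop = limsup m (map ψ atTop) := limsup_comp m ψ atTop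
    rw [h5]
    exact limsup_le_limsup_of_le hψ.tendsto_atTop
  -- existence of x with Flim x ≤ liminf m
  have hA : ∃ x : X, Flim x ≤ liminf m atTop := by
    rcases eq_or_lt_of_le (le_top : liminf m atTop ≤ ⊤) with hL | hL
    · exact ⟨x0, hL ▸ le_top⟩
    · obtain ⟨b, hbanti, hbmem, hbt⟩ := exists_seq_strictAnti_tendsto' hL
      have hfreq : ∀ (k N : ℕ), ∃ n ≥ N, m n < b k := fun k N =>
        frequently_atTop.1 (frequently_lt_of_liminf_lt (by isBoundedDefault) (hbmem k).1) N
      choose g hg1 hg2 using hfreq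
      let j : ℕ → ℕ := fun k => Nat.rec (g 0 0) (fun k jk => g (k + 1) (jk + 1)) k
      have hjsucc : ∀ k, j (k + 1) = g (k + 1) (j k + 1) := fun k => rfl
      have hj : StrictMono j := strictMono_nat_of_lt_succ fun k => by
        rw [hjsucc k]; exact lt_of_lt_of_le (Nat.lt_succ_self _) (hg1 (k + 1) (j k + 1))
      have hjb : ∀ k, m (j k) < b k := by
        intro k
        cases k with
        | zero => exact hg2 0 0
        | succ k => rw [hjsucc k]; exact hg2 (k + 1) (j k + 1)
      have hw : ∀ k, ∃ x ∈ K, F (j k) x < b k := by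
        intro k
        have h5 : (⨅ x ∈ K, F (j k) x) < b k := (hcoer (j k)) ▸ (hjb k)
        by_contra h
        push_neg at h
        exact absurd (le_iInf₂ h) (not_le_of_gt h5)
      choose w hwK hwlt using hw
      obtain ⟨x, hxK, θ, hθ, hθt⟩ := hK.tendsto_subseq hwK
      refine ⟨x, ?_⟩
      have h6 : Flim x ≤ liminf (fun l => F ((j ∘ θ) l) ((w ∘ θ) l)) atTop :=
        hkey (j ∘ θ) (hj.comp hθ) (w ∘ θ) x hθt
      refine h6.trans (le_trans (liminf_le_liminf
        (Eventually.of_forall fun l => (hwlt (θ l)).le)) ?_)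
      have h7 : Tendsto (fun l => b (θ l)) atTop (𝓝 (liminf m atTop)) :=
        hbt.comp hθ.tendsto_atTop
      exact le_of_eq h7.liminf_eq
  obtain ⟨x, hx⟩ := hA
  refine ⟨⟨x, fun y => hx.trans (le_trans liminf_le_limsup (h1 y)), ?_⟩, hmin⟩
  exact tendsto_of_le_liminf_of_limsup_le hx (h1 x)
end

section
/- Let F(t) = μ((−∞,t]) be the cumulative distribution function of a probability measure μ on ℝ, and let F_n(t) = (1/n)∑_{k=1}^n 1_{X_k ≤ t} be the empirical distribution function of i.i.d. samples X_1,...,X_n ∼ μ. Then almost surely, sup_{t∈ℝ} |F_n(t) − F(t)| → 0 as n → ∞. -/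
/-!
By the strong law of large numbers, the empirical measure of any fixed Borel set converges almost
surely, hence almost surely simultaneously on countably many sets. For each `m`, the quantiles of
`μ` at the levels `j / m` give finitely many half-lines `Iic q`, `Iio q` (together with `∅` and
`univ`) such that every `Iic t` is squeezed between two of them with `μ`-gaps at most `1 / m`.
Since measures are monotone, convergence on these brackets makes the error at every `t` at most
`1 / m` plus the errors on the brackets, uniformly in `t`.
-/

open MeasureTheory Filter Topology ProbabilityTheory Set
open scoped NNReal

section EmpiricalMeasure

variable {α : Type*} [MeasurableSpace α]

-- `(0 : ℝ≥0)⁻¹ = 0`: the empirical measure of the empty sample is `0`.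
noncomputable def empiricalMeasure (x : ℕ → α) (n : ℕ) : Measure α :=
  (n : ℝ≥0)⁻¹ • ∑ k ∈ Finset.range n, Measure.dirac (x k)

instance isFiniteMeasure_empiricalMeasure (x : ℕ → α) (n : ℕ) :
    IsFiniteMeasure (empiricalMeasure x n) := by
  unfold empiricalMeasure
  infer_instance

lemma empiricalMeasure_real_apply (x : ℕ → α) (n : ℕ)
    {S : Set α} (hS : MeasurableSet S) :
    (empiricalMeasure x n).real S = (n : ℝ)⁻¹ * ∑ k ∈ Finset.range n, S.indicator 1 (x k) := by
  rw [measureReal_def, empiricalMeasure, Measure.smul_apply, Measure.finsetSum_apply,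
    ENNReal.toReal_smul, ENNReal.toReal_sum (fun k _ => measure_ne_top _ _), NNReal.smul_def]
  congr 2 with k
  by_cases hk : x k ∈ S <;> simp [Measure.dirac_apply' _ hS, hk]

lemma ae_tendsto_empiricalMeasure_real {Ω : Type*} [MeasurableSpace Ω]
    {P : Measure Ω} {μ : Measure α} [IsProbabilityMeasure μ] {X : ℕ → Ω → α}
    (hindep : Pairwise fun i j => X i ⟂ᵢ[P] X j) (hdist : ∀ k, P.map (X k) = μ)
    {S : Set α} (hS : MeasurableSet S) :
    ∀ᵐ ω ∂P, Tendsto (fun n => (empiricalMeasure (X · ω) n).real S) atTop (𝓝 (μ.real S)) := by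
  have hX : ∀ k, AEMeasurable (X k) P := fun k =>
    .of_map_ne_zero (by rw [hdist k]; exact IsProbabilityMeasure.ne_zero μ)
  set g : α → ℝ := S.indicator 1
  have hg : Measurable g := measurable_one.indicator hS
  have hint : Integrable (g ∘ X 0) P := by
    refine Integrable.comp_aemeasurable ?_ (hX 0)
    rw [hdist 0]
    exact (integrable_const 1).indicator hS
  have hmean : P[g ∘ X 0] = μ.real S := by
    rw [← integral_indicator_one hS, ← hdist 0, integral_map (hX 0) hg.aestronglyMeasurable]
    rfl
  have slln := strong_law_ae (fun k => g ∘ X k) hint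
    (fun i j hij => (hindep hij).comp hg hg)
    (fun k => (IdentDistrib.mk (hX k) (hX 0) (by rw [hdist, hdist])).comp hg)
  filter_upwards [slln] with ω hω
  rw [hmean] at hω
  simpa [empiricalMeasure_real_apply _ _ hS] using hω

end EmpiricalMeasure

section Bracketing

variable {α ι β : Type*} [MeasurableSpace α]

def IsBracketing (μ : Measure α) (C : ι → Set α) (ε : ℝ) (𝒜 : Finset (Set α)) : Prop :=
  ∀ i, (∃ A ∈ 𝒜, A ⊆ C i ∧ μ.real (C i) ≤ μ.real A + ε) ∧
    (∃ B ∈ 𝒜, C i ⊆ B ∧ μ.real B ≤ μ.real (C i) + ε)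

variable {μ : Measure α} {C : ι → Set α} {𝒜 : Finset (Set α)} {l : Filter β}
  {ν : β → Measure α} [∀ b, IsFiniteMeasure (ν b)]

lemma IsBracketing.mono {ε ε' : ℝ} (h : IsBracketing μ C ε 𝒜) (hε : ε ≤ ε') :
    IsBracketing μ C ε' 𝒜 := fun i =>
  let ⟨⟨A, hA, hAC, hμA⟩, ⟨B, hB, hCB, hμB⟩⟩ := h i
  ⟨⟨A, hA, hAC, by linarith⟩, ⟨B, hB, hCB, by linarith⟩⟩

lemma IsBracketing.eventually_abs_sub_le {ε δ : ℝ} (h : IsBracketing μ C ε 𝒜)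
    (hconv : ∀ A ∈ 𝒜, Tendsto (fun b => (ν b).real A) l (𝓝 (μ.real A))) (hδ : 0 < δ) :
    ∀ᶠ b in l, ∀ i, |(ν b).real (C i) - μ.real (C i)| ≤ ε + δ := by
  have hclose : ∀ᶠ b in l, ∀ A ∈ 𝒜, |(ν b).real A - μ.real A| < δ :=
    (eventually_all_finset 𝒜).2 fun A hA => by
      simpa [Real.dist_eq] using Metric.tendsto_nhds.1 (hconv A hA) δ hδ
  filter_upwards [hclose] with b hb i
  obtain ⟨⟨A, hA, hAC, hμA⟩, ⟨B, hB, hCB, hμB⟩⟩ := h i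
  have hνA := measureReal_mono (μ := ν b) hAC
  have hνB := measureReal_mono (μ := ν b) hCB
  have hA' := abs_lt.1 (hb A hA)
  have hB' := abs_lt.1 (hb B hB)
  rw [abs_le]
  constructor <;> linarith

theorem tendsto_iSup_abs_measureReal_sub_of_isBracketing
    (h : ∀ ε > 0, ∃ 𝒜 : Finset (Set α), IsBracketing μ C ε 𝒜 ∧
      ∀ A ∈ 𝒜, Tendsto (fun b => (ν b).real A) l (𝓝 (μ.real A))) :
    Tendsto (fun b => ⨆ i, |(ν b).real (C i) - μ.real (C i)|) l (𝓝 0) := by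
  refine tendsto_order.2 ⟨fun a ha => .of_forall fun b =>
    ha.trans_le (Real.iSup_nonneg fun i => abs_nonneg _), fun a ha => ?_⟩
  obtain ⟨𝒜, h𝒜, hconv⟩ := h (a / 3) (by positivity)
  filter_upwards [h𝒜.eventually_abs_sub_le hconv (δ := a / 3) (by positivity)] with b hb
  exact (Real.iSup_le hb (by positivity)).trans_lt (by linarith)

end Bracketing

lemma natCast_div_mem_Ioo {j m : ℕ} (hj : j ∈ Finset.Ioo 0 m) : (j / m : ℝ) ∈ Ioo 0 1 := by
  obtain ⟨hj0, hjm⟩ := Finset.mem_Ioo.1 hj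
  have hm : (0 : ℝ) < m := by exact_mod_cast hj0.trans hjm
  exact ⟨by positivity, (div_lt_one hm).2 (by exact_mod_cast hjm)⟩

lemma exists_natCast_div_mem_Ico {m : ℕ} (hm : 0 < m) {x : ℝ} (h1 : 1 / m < x) (h2 : x ≤ 1) :
    ∃ j ∈ Finset.Ioo 0 m, (j / m : ℝ) ∈ Ico (x - 1 / m) x := by
  have hm' : (0 : ℝ) < m := by exact_mod_cast hm
  have hmx : 1 < m * x := by rwa [div_lt_iff₀ hm', mul_comm] at h1
  obtain ⟨j, hj⟩ : ∃ j, ⌈m * x⌉₊ = j + 1 :=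
    Nat.exists_eq_add_one.2 (Nat.ceil_pos.2 (by linarith))
  have hle := Nat.le_ceil (m * x)
  have hlt := Nat.ceil_lt_add_one (by positivity : 0 ≤ m * x)
  have hcm : ⌈m * x⌉₊ ≤ m := Nat.ceil_le.2 (by nlinarith)
  rw [hj] at hle hlt hcm
  push_cast at hle hlt
  refine ⟨j, Finset.mem_Ioo.2 ⟨by exact_mod_cast (by linarith : (0 : ℝ) < j), by omega⟩, ?_, ?_⟩
  · rw [sub_le_iff_le_add, ← add_div, le_div_iff₀ hm']
    linarith
  · rw [div_lt_iff₀ hm']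
    linarith

lemma exists_natCast_div_mem_Ioc {m : ℕ} (hm : 0 < m) {x : ℝ} (h0 : 0 ≤ x)
    (h1 : x + 1 / m < 1) :
    ∃ j ∈ Finset.Ioo 0 m, (j / m : ℝ) ∈ Ioc x (x + 1 / m) := by
  have hm' : (0 : ℝ) < m := by exact_mod_cast hm
  have hmx : m * x + 1 < m := by
    have := mul_lt_mul_of_pos_left h1 hm'
    rwa [mul_add, mul_one_div_cancel hm'.ne', mul_one] at this
  have hle := Nat.floor_le (by positivity : 0 ≤ m * x)
  have hlt := Nat.lt_floor_add_one (m * x)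
  refine ⟨⌊m * x⌋₊ + 1, Finset.mem_Ioo.2 ⟨by omega, ?_⟩, ?_, ?_⟩
  · exact_mod_cast (by push_cast; linarith : ((⌊m * x⌋₊ + 1 : ℕ) : ℝ) < m)
  · rw [lt_div_iff₀ hm']
    push_cast
    linarith
  · rw [div_le_iff₀ hm', add_mul, one_div_mul_cancel hm'.ne']
    push_cast
    linarith

noncomputable def quantile (μ : Measure ℝ) (p : ℝ) : ℝ :=
  sInf {t | p ≤ cdf μ t}

section Quantile

variable {μ : Measure ℝ} {p t : ℝ}

lemma quantile_le_iff (hp : p ∈ Ioo 0 1) : quantile μ p ≤ t ↔ p ≤ cdf μ t := by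
  have hne : {t | p ≤ cdf μ t}.Nonempty :=
    ((tendsto_cdf_atTop μ).eventually (eventually_ge_nhds hp.2)).exists
  have hbdd : BddBelow {t | p ≤ cdf μ t} := by
    obtain ⟨t₀, ht₀⟩ := ((tendsto_cdf_atBot μ).eventually (eventually_lt_nhds hp.1)).exists
    exact ⟨t₀, fun s hs => le_of_not_gt fun hst =>
      lt_irrefl _ ((hs.trans (monotone_cdf μ hst.le)).trans_lt ht₀)⟩
  refine ⟨fun hq => le_trans ?_ (monotone_cdf μ hq), fun ht => csInf_le hbdd ht⟩
  -- the infimum is attained, by right continuity of the cdf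
  refine ge_of_tendsto (((cdf μ).right_continuous _).mono_left
    (nhdsWithin_mono _ Ioi_subset_Ici_self)) ?_
  filter_upwards [self_mem_nhdsWithin] with s hs
  obtain ⟨u, hu, hus⟩ := exists_lt_of_csInf_lt hne hs
  exact hu.trans (monotone_cdf μ hus.le)

lemma lt_quantile_iff (hp : p ∈ Ioo 0 1) : t < quantile μ p ↔ cdf μ t < p := by
  simpa only [not_le] using (quantile_le_iff hp).not

variable [IsProbabilityMeasure μ]

lemma le_measureReal_Iic_quantile (hp : p ∈ Ioo 0 1) : p ≤ μ.real (Iic (quantile μ p)) :=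
  cdf_eq_real μ _ ▸ (quantile_le_iff hp).1 le_rfl

lemma measureReal_Iio_quantile_le (hp : p ∈ Ioo 0 1) : μ.real (Iio (quantile μ p)) ≤ p := by
  have h := (cdf μ).measure_Iio (tendsto_cdf_atBot μ) (quantile μ p)
  rw [measure_cdf, sub_zero] at h
  rw [measureReal_def, h, ENNReal.toReal_ofReal']
  refine max_le (le_of_tendsto ((monotone_cdf μ).tendsto_leftLim _) ?_) hp.1.le
  filter_upwards [self_mem_nhdsWithin] with s hs
  exact ((lt_quantile_iff hp).1 hs).le

end Quantile

open Classical in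
noncomputable def halfLineBrackets (μ : Measure ℝ) (m : ℕ) : Finset (Set ℝ) :=
  {∅, univ} ∪ (Finset.Ioo 0 m).image (fun j : ℕ => Iic (quantile μ (j / m))) ∪
    (Finset.Ioo 0 m).image (fun j : ℕ => Iio (quantile μ (j / m)))

section HalfLineBrackets

variable {μ : Measure ℝ} {m : ℕ}

lemma measurableSet_of_mem_halfLineBrackets {A : Set ℝ} (hA : A ∈ halfLineBrackets μ m) :
    MeasurableSet A := by
  simp only [halfLineBrackets, Finset.mem_union, Finset.mem_insert, Finset.mem_singleton,
    Finset.mem_image] at hA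
  rcases hA with ((rfl | rfl) | ⟨j, -, rfl⟩) | ⟨j, -, rfl⟩
  all_goals measurability

variable [IsProbabilityMeasure μ]

lemma exists_mem_halfLineBrackets_subset_Iic (hm : 0 < m) (t : ℝ) :
    ∃ A ∈ halfLineBrackets μ m, A ⊆ Iic t ∧ μ.real (Iic t) ≤ μ.real A + 1 / m := by
  rcases le_or_gt (μ.real (Iic t)) (1 / m) with hx | hx
  · exact ⟨∅, by simp [halfLineBrackets], empty_subset _, by simpa using hx⟩
  obtain ⟨j, hj, hlo, hhi⟩ := exists_natCast_div_mem_Ico hm hx measureReal_le_one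
  have hp := natCast_div_mem_Ioo hj
  refine ⟨Iic (quantile μ (j / m)),
    Finset.mem_union_left _ (Finset.mem_union_right _ (Finset.mem_image_of_mem _ hj)), ?_, ?_⟩
  · exact Iic_subset_Iic.2 ((quantile_le_iff hp).2 (cdf_eq_real μ t ▸ hhi.le))
  · linarith [le_measureReal_Iic_quantile (μ := μ) hp]

lemma exists_mem_halfLineBrackets_Iic_subset (hm : 0 < m) (t : ℝ) :
    ∃ B ∈ halfLineBrackets μ m, Iic t ⊆ B ∧ μ.real B ≤ μ.real (Iic t) + 1 / m := by
  rcases le_or_gt 1 (μ.real (Iic t) + 1 / m) with hx | hx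
  · exact ⟨univ, by simp [halfLineBrackets], subset_univ _, by simpa using hx⟩
  obtain ⟨j, hj, hlo, hhi⟩ := exists_natCast_div_mem_Ioc hm measureReal_nonneg hx
  have hp := natCast_div_mem_Ioo hj
  refine ⟨Iio (quantile μ (j / m)),
    Finset.mem_union_right _ (Finset.mem_image_of_mem _ hj), ?_, ?_⟩
  · exact Iic_subset_Iio.2 ((lt_quantile_iff hp).2 (cdf_eq_real μ t ▸ hlo))
  · exact (measureReal_Iio_quantile_le hp).trans hhi

lemma isBracketing_halfLineBrackets (hm : 0 < m) :
    IsBracketing μ Iic (1 / m) (halfLineBrackets μ m) := fun t =>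
  ⟨exists_mem_halfLineBrackets_subset_Iic hm t, exists_mem_halfLineBrackets_Iic_subset hm t⟩

end HalfLineBrackets

theorem stmt13_general {Ω : Type*} [MeasurableSpace Ω] (P : Measure Ω)
    (μ : Measure ℝ) [IsProbabilityMeasure μ]
    (X : ℕ → Ω → ℝ)
    -- independent ...
    (hindep : iIndepFun X P)
    -- ... identically distributed with common law μ
    (hdist : ∀ k, P.map (X k) = μ) :
    ∀ᵐ ω ∂P, Tendsto (fun n : ℕ =>
        ⨆ t : ℝ, |(n : ℝ)⁻¹ * (∑ k ∈ Finset.range n, if X k ω ≤ t then (1 : ℝ) else 0)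
          - (μ (Set.Iic t)).toReal|) atTop (𝓝 0) := by
  have hbrackets : ∀ᵐ ω ∂P, ∀ m, ∀ A ∈ halfLineBrackets μ m,
      Tendsto (fun n => (empiricalMeasure (X · ω) n).real A) atTop (𝓝 (μ.real A)) :=
    ae_all_iff.2 fun m => (eventually_all_finset _).2 fun A hA =>
      ae_tendsto_empiricalMeasure_real (fun i j hij => hindep.indepFun hij) hdist
        (measurableSet_of_mem_halfLineBrackets hA)
  filter_upwards [hbrackets] with ω hω
  have h := tendsto_iSup_abs_measureReal_sub_of_isBracketing (C := Iic) fun ε hε => by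
    obtain ⟨m, hm⟩ := exists_nat_one_div_lt hε
    refine ⟨halfLineBrackets μ (m + 1), ?_, hω _⟩
    exact (isBracketing_halfLineBrackets m.succ_pos).mono (by exact_mod_cast hm.le)
  simpa [empiricalMeasure_real_apply _ _ measurableSet_Iic, indicator_apply, measureReal_def]
    using h

theorem stmt13 {Ω : Type*} [MeasurableSpace Ω] (P : Measure Ω)
    [IsProbabilityMeasure P]
    (μ : Measure ℝ) [IsProbabilityMeasure μ]
    (X : ℕ → Ω → ℝ) (hmeas : ∀ k, Measurable (X k))
    -- independent ...
    (hindep : iIndepFun X P)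
    -- ... identically distributed with common law μ
    (hdist : ∀ k, P.map (X k) = μ) :
    ∀ᵐ ω ∂P, Tendsto (fun n : ℕ =>
        ⨆ t : ℝ, |(n : ℝ)⁻¹ * (∑ k ∈ Finset.range n, if X k ω ≤ t then (1 : ℝ) else 0)
          - (μ (Set.Iic t)).toReal|) atTop (𝓝 0) :=
  stmt13_general P μ X hindep hdist
end

section
/- Let π_s, π_t be joint probability laws of (X^s, Y^s) and (X^t, Y^t). Suppose T : ℝ^p → ℝ^p is a bijection with (1) T#μ_s = μ_t where μ_s, μ_t are the X-marginals, (2) the conditional distribution of Y^t given X^t = T(x) equals the conditional distribution of Y^s given X^s = x for μ_s-a.e. x, and (3) 𝒞₂ = {f ∘ T⁻¹ : f ∈ 𝒞₁}. If f* minimizes E_{π_s}[L(f(X^s), Y^s)] over 𝒞₁, then f* ∘ T⁻¹ minimizes E_{π_t}[L(g(X^t), Y^t)] over 𝒞₂. -/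
open MeasureTheory Filter Topology

theorem stmt16 {p : ℕ} {𝒴 : Type*} [MeasurableSpace 𝒴]
    (μs μt : Measure (EuclideanSpace ℝ (Fin p)))
    [IsProbabilityMeasure μs] [IsProbabilityMeasure μt]
    -- conditional distributions of Y^s given X^s = x and of Y^t given X^t = x
    (νs νt : EuclideanSpace ℝ (Fin p) → Measure 𝒴)
    (hνs : ∀ x, IsProbabilityMeasure (νs x))
    (hνt : ∀ x, IsProbabilityMeasure (νt x))
    (L : ℝ → 𝒴 → ℝ)
    -- T is a (bi-measurable) bijection
    (T : EuclideanSpace ℝ (Fin p) ≃ EuclideanSpace ℝ (Fin p))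
    (hT : Measurable T) (hTinv : Measurable T.symm)
    -- (1) T pushes μs forward to μt
    (hpush : μs.map T = μt)
    -- (2) ν^t_{T(x)} = ν^s_x for μs-a.e. x
    (hcond : ∀ᵐ x ∂μs, νt (T x) = νs x)
    -- (3) 𝒞₂ = 𝒞₁ ∘ T⁻¹
    (C1 C2 : Set (EuclideanSpace ℝ (Fin p) → ℝ))
    (hC2 : C2 = (fun f => f ∘ T.symm) '' C1)
    -- regularity needed to integrate
    (hreg : ∀ g : EuclideanSpace ℝ (Fin p) → ℝ,
      AEStronglyMeasurable (fun x => ∫ y, L (g x) y ∂(νt x)) μt)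
    -- f* minimizes the source risk over 𝒞₁
    (fstar : EuclideanSpace ℝ (Fin p) → ℝ) (hfstar : fstar ∈ C1)
    (hmin : ∀ f ∈ C1,
      (∫ x, (∫ y, L (fstar x) y ∂(νs x)) ∂μs) ≤
        ∫ x, (∫ y, L (f x) y ∂(νs x)) ∂μs) :
    -- then f* ∘ T⁻¹ minimizes the target risk over 𝒞₂
    (fstar ∘ T.symm) ∈ C2 ∧
      ∀ g ∈ C2,
        (∫ x, (∫ y, L ((fstar ∘ T.symm) x) y ∂(νt x)) ∂μt) ≤
          ∫ x, (∫ y, L (g x) y ∂(νt x)) ∂μt := by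
  have key : ∀ f : EuclideanSpace ℝ (Fin p) → ℝ,
      (∫ x, (∫ y, L ((f ∘ T.symm) x) y ∂(νt x)) ∂μt)
        = ∫ x, (∫ y, L (f x) y ∂(νs x)) ∂μs := by
    intro f
    rw [← hpush, integral_map hT.aemeasurable (by rw [hpush]; exact hreg (f ∘ T.symm))]
    refine integral_congr_ae ?_
    filter_upwards [hcond] with x hx
    simp [hx]
  constructor
  · rw [hC2]; exact ⟨fstar, hfstar, rfl⟩
  · intro g hg
    rw [hC2] at hg
    obtain ⟨f, hf, rfl⟩ := hg
    rw [key fstar, key f]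
    exact hmin f hf
end
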